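/- Let S be a finite set with |S| ≥ 3 and an involution σ : S → S. Let a(z) = −1/z̄ be the antipodal involution of ℙ¹(ℂ), and let z, w : S → ℙ¹(ℂ) be injective tuples satisfying a(z_s) = z_{σ(s)} and a(w_s) = w_{σ(s)} for all s ∈ S. If there exists g ∈ GL₂(ℂ) whose Möbius transformation maps z_s to w_s for every s ∈ S, then there exists h ∈ SU(2) whose Möbius transformation maps z_s to w_s for every s ∈ S. -/

import Mathlib

open scoped Classical

noncomputable section

/-- Complex conjugation on `ℙ¹(ℂ) = ℂ ∪ {∞}` (the one-point compactification of `ℂ`),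
fixing `∞`. -/
def conjP : OnePoint ℂ → OnePoint ℂ :=
  fun z => Option.map (fun w => (starRingEnd ℂ) w) z

/-- `ℙ¹(ℝ) = ℝ ∪ {∞}` as a subset of `ℙ¹(ℂ)`. -/
def P1R : Set (OnePoint ℂ) :=
  insert OnePoint.infty {z : OnePoint ℂ | ∃ r : ℝ, z = ((r : ℂ) : OnePoint ℂ)}

/-- The Möbius transformation of `ℙ¹(ℂ)` associated to a 2×2 complex matrix
`m = !![a, b; c, d]`, i.e. `z ↦ (a z + b) / (c z + d)` extended to `∞` as usual. -/
def moeb (m : Matrix (Fin 2) (Fin 2) ℂ) : OnePoint ℂ → OnePoint ℂ :=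
  fun z =>
    Option.rec (motive := fun _ => OnePoint ℂ)
      (if m 1 0 = 0 then OnePoint.infty
       else ((m 0 0 / m 1 0 : ℂ) : OnePoint ℂ))
      (fun w =>
        if m 1 0 * w + m 1 1 = 0 then OnePoint.infty
        else (((m 0 0 * w + m 0 1) / (m 1 0 * w + m 1 1) : ℂ) : OnePoint ℂ))
      z

/-- The Möbius action of `SL₂(ℝ)` on `ℙ¹(ℂ)` (a real matrix acts through its
complexification). -/
def moebSL (g : Matrix.SpecialLinearGroup (Fin 2) ℝ) : OnePoint ℂ → OnePoint ℂ :=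
  moeb ((g : Matrix (Fin 2) (Fin 2) ℝ).map Complex.ofReal)

/-- The configuration space `Conf⁺_{(F,ϱ)}`: injective tuples `(z_f)_{f ∈ F}` in `ℙ¹(ℂ)`
with `z_f ∈ ℙ¹(ℝ)` for fixed points `f` of `ϱ`, and `z_f ∉ ℙ¹(ℝ)`, `z_{ϱ f} = conj (z_f)`
for non-fixed `f`.  As a set of functions it carries the subspace topology of the
product topology. -/
def ConfPlus (F : Type) (ϱ : F → F) : Set (F → OnePoint ℂ) :=
  {z | Function.Injective z ∧ (∀ f, ϱ f = f → z f ∈ P1R) ∧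
       (∀ f, ϱ f ≠ f → z f ∉ P1R ∧ z (ϱ f) = conjP (z f))}

/-- The antipodal involution `z ↦ -1/z̄` of `ℙ¹(ℂ)`, interchanging `0` and `∞`. -/
def antip : OnePoint ℂ → OnePoint ℂ :=
  fun z =>
    Option.rec (motive := fun _ => OnePoint ℂ) (((0 : ℂ) : OnePoint ℂ))
      (fun w =>
        if w = 0 then OnePoint.infty
        else (((-1) / (starRingEnd ℂ) w : ℂ) : OnePoint ℂ))
      z

/-- The configuration space `Conf^∅_{(F,ϱ)}`: injective tuples `(z_f)_{f ∈ F}` in `ℙ¹(ℂ)`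
with `z_{ϱ f} = -1/z̄_f` for all `f`. -/
def ConfEmpty (F : Type) (ϱ : F → F) : Set (F → OnePoint ℂ) :=
  {z | Function.Injective z ∧ ∀ f, z (ϱ f) = antip (z f)}

/-- The orbit relation of the diagonal `SL₂(ℝ)` Möbius action on `Conf⁺_{(F,ϱ)}`;
`Quot (slRel F ϱ)` is the quotient `Conf⁺_{(F,ϱ)}/SL₂(ℝ)` with the quotient topology. -/
def slRel (F : Type) (ϱ : F → F) (x y : ↥(ConfPlus F ϱ)) : Prop :=
  ∃ g : Matrix.SpecialLinearGroup (Fin 2) ℝ, ∀ f, moebSL g (x.1 f) = y.1 f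

/-- The orbit relation of the diagonal `SU(2)` Möbius action on `Conf^∅_{(F,ϱ)}`;
`Quot (suRel F ϱ)` is the quotient `Conf^∅_{(F,ϱ)}/SU(2)` with the quotient topology. -/
def suRel (F : Type) (ϱ : F → F) (x y : ↥(ConfEmpty F ϱ)) : Prop :=
  ∃ g : Matrix.specialUnitaryGroup (Fin 2) ℂ,
    ∀ f, moeb (g : Matrix (Fin 2) (Fin 2) ℂ) (x.1 f) = y.1 f

/-- The negation map `e : (z_f) ↦ (-z_f)` on tuples in `ℙ¹(ℂ)` (with `-∞ = ∞`). -/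
def negP : OnePoint ℂ → OnePoint ℂ :=
  fun z => Option.map (fun w => -w) z

namespace Stmt13Aux

lemma moeb_infty (m : Matrix (Fin 2) (Fin 2) ℂ) :
    moeb m OnePoint.infty = if m 1 0 = 0 then OnePoint.infty
      else ((m 0 0 / m 1 0 : ℂ) : OnePoint ℂ) := rfl

lemma moeb_coe (m : Matrix (Fin 2) (Fin 2) ℂ) (w : ℂ) :
    moeb m (w : OnePoint ℂ) = if m 1 0 * w + m 1 1 = 0 then OnePoint.infty
      else (((m 0 0 * w + m 0 1) / (m 1 0 * w + m 1 1) : ℂ) : OnePoint ℂ) := rfl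

lemma mul_entry (m n : Matrix (Fin 2) (Fin 2) ℂ) (i j : Fin 2) :
    (m * n) i j = m i 0 * n 0 j + m i 1 * n 1 j := by
  simp [Matrix.mul_apply, Fin.sum_univ_two]

lemma moeb_one (x : OnePoint ℂ) : moeb 1 x = x := by
  cases x with
  | infty =>
    rw [moeb_infty]; simp [Matrix.one_apply]
  | coe w =>
    rw [moeb_coe]; simp [Matrix.one_apply]

lemma moeb_smul (c : ℂ) (hc : c ≠ 0) (m : Matrix (Fin 2) (Fin 2) ℂ) (x : OnePoint ℂ) :
    moeb (c • m) x = moeb m x := by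
  cases x with
  | infty =>
    rw [moeb_infty, moeb_infty]
    simp only [Matrix.smul_apply, smul_eq_mul, mul_eq_zero, or_iff_right hc]
    split_ifs
    · rfl
    · rw [mul_div_mul_left _ _ hc]
  | coe w =>
    rw [moeb_coe, moeb_coe]
    have h1 : (c • m) 1 0 * w + (c • m) 1 1 = c * (m 1 0 * w + m 1 1) := by
      simp only [Matrix.smul_apply, smul_eq_mul]; ring
    have h2 : (c • m) 0 0 * w + (c • m) 0 1 = c * (m 0 0 * w + m 0 1) := by
      simp only [Matrix.smul_apply, smul_eq_mul]; ring
    simp only [h1, h2, mul_eq_zero, or_iff_right hc]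
    split_ifs with h
    · rfl
    · rw [mul_div_mul_left _ _ hc]

lemma moeb_mul (m n : Matrix (Fin 2) (Fin 2) ℂ) (hm : m.det ≠ 0) (hn : n.det ≠ 0)
    (x : OnePoint ℂ) : moeb (m * n) x = moeb m (moeb n x) := by
  have hnd : n 0 0 * n 1 1 - n 0 1 * n 1 0 ≠ 0 := by rwa [Matrix.det_fin_two] at hn
  cases x with
  | infty =>
    rw [moeb_infty, moeb_infty]
    by_cases h10 : n 1 0 = 0
    · have h00 : n 0 0 ≠ 0 := fun h => hnd (by rw [h, h10]; ring)
      have e1 : (m * n) 1 0 = m 1 0 * n 0 0 := by rw [mul_entry, h10]; ring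
      have e2 : (m * n) 0 0 = m 0 0 * n 0 0 := by rw [mul_entry, h10]; ring
      rw [if_pos h10, moeb_infty]
      simp only [e1, e2, mul_eq_zero, or_iff_left h00]
      split_ifs
      · rfl
      · rw [mul_div_mul_right _ _ h00]
    · rw [if_neg h10, moeb_coe]
      have key1 : m 1 0 * (n 0 0 / n 1 0) + m 1 1
          = (m 1 0 * n 0 0 + m 1 1 * n 1 0) / n 1 0 := by field_simp
      have key2 : m 0 0 * (n 0 0 / n 1 0) + m 0 1
          = (m 0 0 * n 0 0 + m 0 1 * n 1 0) / n 1 0 := by field_simp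
      simp only [mul_entry, key1, key2, div_eq_zero_iff, or_iff_left h10]
      split_ifs with h
      · rfl
      · congr 1
        field_simp
  | coe v =>
    rw [moeb_coe, moeb_coe]
    obtain ⟨N, hN⟩ : ∃ N, n 0 0 * v + n 0 1 = N := ⟨_, rfl⟩
    obtain ⟨D, hD⟩ : ∃ D, n 1 0 * v + n 1 1 = D := ⟨_, rfl⟩
    have e10 : (m * n) 1 0 * v + (m * n) 1 1 = m 1 0 * N + m 1 1 * D := by
      rw [mul_entry, mul_entry, ← hN, ← hD]; ring
    have e00 : (m * n) 0 0 * v + (m * n) 0 1 = m 0 0 * N + m 0 1 * D := by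
      rw [mul_entry, mul_entry, ← hN, ← hD]; ring
    simp only [e10, e00, hN, hD]
    by_cases hDz : D = 0
    · have hNz : N ≠ 0 := by
        intro h0
        rw [← hN] at h0
        rw [← hD] at hDz
        exact hnd (by linear_combination n 0 0 * hDz - n 1 0 * h0)
      rw [if_pos hDz, moeb_infty]
      simp only [hDz, mul_zero, add_zero, mul_eq_zero, or_iff_left hNz]
      split_ifs
      · rfl
      · rw [mul_div_mul_right _ _ hNz]
    · rw [if_neg hDz, moeb_coe]
      have key1 : m 1 0 * (N / D) + m 1 1 = (m 1 0 * N + m 1 1 * D) / D := by field_simp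
      have key2 : m 0 0 * (N / D) + m 0 1 = (m 0 0 * N + m 0 1 * D) / D := by field_simp
      simp only [key1, key2, div_eq_zero_iff, or_iff_left hDz]
      split_ifs with h
      · rfl
      · congr 1
        rw [div_div_div_cancel_right₀]
        exact hDz

lemma conjP_infty : conjP OnePoint.infty = OnePoint.infty := rfl

lemma conjP_coe (w : ℂ) : conjP (w : OnePoint ℂ) = ((starRingEnd ℂ w : ℂ) : OnePoint ℂ) := rfl

lemma conjP_conjP (x : OnePoint ℂ) : conjP (conjP x) = x := by
  cases x with
  | infty => rfl
  | coe w => rw [conjP_coe, conjP_coe, Complex.conj_conj]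

lemma antip_eq (x : OnePoint ℂ) :
    antip x = moeb (Matrix.of ![![0, -1], ![1, 0]]) (conjP x) := by
  have e10 : (Matrix.of ![![(0:ℂ), -1], ![1, 0]]) 1 0 = 1 := rfl
  have e11 : (Matrix.of ![![(0:ℂ), -1], ![1, 0]]) 1 1 = 0 := rfl
  have e00 : (Matrix.of ![![(0:ℂ), -1], ![1, 0]]) 0 0 = 0 := rfl
  have e01 : (Matrix.of ![![(0:ℂ), -1], ![1, 0]]) 0 1 = -1 := rfl
  cases x with
  | infty =>
    rw [conjP_infty, moeb_infty, if_neg (e10 ▸ one_ne_zero), e10, e00]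
    show ((0:ℂ) : OnePoint ℂ) = _
    norm_num
  | coe w =>
    rw [conjP_coe, moeb_coe]
    have hach : antip (w : OnePoint ℂ) = if w = 0 then OnePoint.infty
        else (((-1) / (starRingEnd ℂ) w : ℂ) : OnePoint ℂ) := rfl
    rw [hach]
    simp only [e10, e11, e00, e01, one_mul, add_zero, zero_mul, zero_add, map_eq_zero]

lemma conjP_moeb (m : Matrix (Fin 2) (Fin 2) ℂ) (x : OnePoint ℂ) :
    conjP (moeb m x) = moeb (m.map (starRingEnd ℂ)) (conjP x) := by
  cases x with
  | infty =>
    rw [conjP_infty, moeb_infty, moeb_infty]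
    simp only [Matrix.map_apply, map_eq_zero]
    split_ifs
    · rfl
    · rw [conjP_coe, map_div₀]
  | coe w =>
    rw [conjP_coe, moeb_coe, moeb_coe]
    have hc : m.map (starRingEnd ℂ) 1 0 * (starRingEnd ℂ) w + m.map (starRingEnd ℂ) 1 1
        = (starRingEnd ℂ) (m 1 0 * w + m 1 1) := by
      simp [Matrix.map_apply]
    have hn : m.map (starRingEnd ℂ) 0 0 * (starRingEnd ℂ) w + m.map (starRingEnd ℂ) 0 1
        = (starRingEnd ℂ) (m 0 0 * w + m 0 1) := by
      simp [Matrix.map_apply]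
    simp only [hc, hn, map_eq_zero]
    split_ifs
    · rfl
    · rw [conjP_coe, map_div₀]

lemma moeb_fix_infty (n : Matrix (Fin 2) (Fin 2) ℂ)
    (h : moeb n OnePoint.infty = OnePoint.infty) : n 1 0 = 0 := by
  rw [moeb_infty] at h
  by_contra h10
  rw [if_neg h10] at h
  exact (OnePoint.coe_ne_infty _) h

lemma moeb_fix_coe (n : Matrix (Fin 2) (Fin 2) ℂ) (p : ℂ)
    (h : moeb n (p : OnePoint ℂ) = (p : OnePoint ℂ)) :
    n 1 0 * p ^ 2 + (n 1 1 - n 0 0) * p - n 0 1 = 0 := by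
  rw [moeb_coe] at h
  by_cases hD : n 1 0 * p + n 1 1 = 0
  · rw [if_pos hD] at h
    exact absurd h (OnePoint.infty_ne_coe _)
  · rw [if_neg hD] at h
    rw [OnePoint.coe_eq_coe] at h
    rw [div_eq_iff hD] at h
    linear_combination -h

lemma claimA (n : Matrix (Fin 2) (Fin 2) ℂ) (hdet : n.det ≠ 0) (h10 : n 1 0 = 0)
    (p q : ℂ) (hpq : p ≠ q)
    (hp : n 1 0 * p ^ 2 + (n 1 1 - n 0 0) * p - n 0 1 = 0)
    (hq : n 1 0 * q ^ 2 + (n 1 1 - n 0 0) * q - n 0 1 = 0) :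
    ∃ lam : ℂ, lam ≠ 0 ∧ n = lam • (1 : Matrix (Fin 2) (Fin 2) ℂ) := by
  have hsub : (n 1 1 - n 0 0) * (p - q) = 0 := by
    rw [h10] at hp hq
    linear_combination hp - hq
  have h11 : n 1 1 = n 0 0 := by
    rcases mul_eq_zero.mp hsub with h | h
    · exact sub_eq_zero.mp h
    · exact absurd (sub_eq_zero.mp h) hpq
  have h01 : n 0 1 = 0 := by
    rw [h10, h11] at hp
    linear_combination -hp
  refine ⟨n 0 0, ?_, ?_⟩
  · intro h0
    apply hdet
    rw [Matrix.det_fin_two, h11, h0, h01]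
    ring
  · ext i j
    fin_cases i <;> fin_cases j <;>
      simp [Matrix.smul_apply, Matrix.one_apply, h10, h11, h01]

lemma claimB (n : Matrix (Fin 2) (Fin 2) ℂ) (hdet : n.det ≠ 0)
    (p q r : ℂ) (hpq : p ≠ q) (hpr : p ≠ r) (hqr : q ≠ r)
    (hp : n 1 0 * p ^ 2 + (n 1 1 - n 0 0) * p - n 0 1 = 0)
    (hq : n 1 0 * q ^ 2 + (n 1 1 - n 0 0) * q - n 0 1 = 0)
    (hr : n 1 0 * r ^ 2 + (n 1 1 - n 0 0) * r - n 0 1 = 0) :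
    ∃ lam : ℂ, lam ≠ 0 ∧ n = lam • (1 : Matrix (Fin 2) (Fin 2) ℂ) := by
  have e1 : (n 1 0 * (p + q) + (n 1 1 - n 0 0)) * (p - q) = 0 := by
    linear_combination hp - hq
  have e2 : (n 1 0 * (p + r) + (n 1 1 - n 0 0)) * (p - r) = 0 := by
    linear_combination hp - hr
  have f1 : n 1 0 * (p + q) + (n 1 1 - n 0 0) = 0 := by
    rcases mul_eq_zero.mp e1 with h | h
    · exact h
    · exact absurd (sub_eq_zero.mp h) hpq
  have f2 : n 1 0 * (p + r) + (n 1 1 - n 0 0) = 0 := by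
    rcases mul_eq_zero.mp e2 with h | h
    · exact h
    · exact absurd (sub_eq_zero.mp h) hpr
  have g1 : n 1 0 * (q - r) = 0 := by linear_combination f1 - f2
  have h10 : n 1 0 = 0 := by
    rcases mul_eq_zero.mp g1 with h | h
    · exact h
    · exact absurd (sub_eq_zero.mp h) hqr
  exact claimA n hdet h10 p q hpq hp hq

lemma moeb_fix3 (n : Matrix (Fin 2) (Fin 2) ℂ) (hdet : n.det ≠ 0)
    (x y v : OnePoint ℂ) (hxy : x ≠ y) (hxv : x ≠ v) (hyv : y ≠ v)
    (hx : moeb n x = x) (hy : moeb n y = y) (hv : moeb n v = v) :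
    ∃ lam : ℂ, lam ≠ 0 ∧ n = lam • (1 : Matrix (Fin 2) (Fin 2) ℂ) := by
  cases x with
  | infty =>
    cases y with
    | infty => exact absurd rfl hxy
    | coe p =>
      cases v with
      | infty => exact absurd rfl hxv
      | coe q =>
        have hpq : p ≠ q := fun h => hyv (by rw [h])
        exact claimA n hdet (moeb_fix_infty n hx) p q hpq
          (moeb_fix_coe n p hy) (moeb_fix_coe n q hv)
  | coe p =>
    cases y with
    | infty =>
      cases v with
      | infty => exact absurd rfl hyv
      | coe q =>
        have hpq : p ≠ q := fun h => hxv (by rw [h])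
        exact claimA n hdet (moeb_fix_infty n hy) p q hpq
          (moeb_fix_coe n p hx) (moeb_fix_coe n q hv)
    | coe q =>
      cases v with
      | infty =>
        have hpq : p ≠ q := fun h => hxy (by rw [h])
        exact claimA n hdet (moeb_fix_infty n hv) p q hpq
          (moeb_fix_coe n p hx) (moeb_fix_coe n q hy)
      | coe r =>
        have hpq : p ≠ q := fun h => hxy (by rw [h])
        have hpr : p ≠ r := fun h => hxv (by rw [h])
        have hqr : q ≠ r := fun h => hyv (by rw [h])
        exact claimB n hdet p q r hpq hpr hqr
          (moeb_fix_coe n p hx) (moeb_fix_coe n q hy) (moeb_fix_coe n r hv)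

end Stmt13Aux

open Stmt13Aux

/-- if two injective antipodally-equivariant tuples on `ℙ¹(ℂ)` labeled by
`S`, `|S| ≥ 3`, are related by a Möbius transformation from `GL₂(ℂ)`, then they are
related by a Möbius transformation from `SU(2)`. -/
theorem stmt13 (S : Type) [Fintype S] (hS : 3 ≤ Nat.card S) (σ : S → S)
    (hσ : Function.Involutive σ) (z w : S → OnePoint ℂ)
    (hz : Function.Injective z) (hw : Function.Injective w)
    (hze : ∀ s, antip (z s) = z (σ s)) (hwe : ∀ s, antip (w s) = w (σ s))
    (hg : ∃ g : Matrix.GeneralLinearGroup (Fin 2) ℂ,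
      ∀ s, moeb (g : Matrix (Fin 2) (Fin 2) ℂ) (z s) = w s) :
    ∃ h : Matrix.specialUnitaryGroup (Fin 2) ℂ,
      ∀ s, moeb (h : Matrix (Fin 2) (Fin 2) ℂ) (z s) = w s := by
  classical
  obtain ⟨G, hG⟩ := hg
  obtain ⟨g, hgdef⟩ : ∃ g : Matrix (Fin 2) (Fin 2) ℂ, (G : Matrix (Fin 2) (Fin 2) ℂ) = g := ⟨_, rfl⟩
  rw [hgdef] at hG
  have hgu : IsUnit g.det := by
    rw [← hgdef]
    exact (Matrix.isUnit_iff_isUnit_det _).mp G.isUnit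
  have hgd : g.det ≠ 0 := by
    intro h0
    rw [h0] at hgu
    exact (not_isUnit_zero : ¬ IsUnit (0:ℂ)) hgu
  -- the matrix J implementing the antipodal map
  obtain ⟨J, hJdef⟩ : ∃ J : Matrix (Fin 2) (Fin 2) ℂ, Matrix.of ![![0, -1], ![1, 0]] = J := ⟨_, rfl⟩
  have eJ00 : J 0 0 = 0 := by rw [← hJdef]; rfl
  have eJ01 : J 0 1 = -1 := by rw [← hJdef]; rfl
  have eJ10 : J 1 0 = 1 := by rw [← hJdef]; rfl
  have eJ11 : J 1 1 = 0 := by rw [← hJdef]; rfl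
  have hJdet : J.det = 1 := by rw [Matrix.det_fin_two, eJ00, eJ01, eJ10, eJ11]; ring
  have hJd : J.det ≠ 0 := by rw [hJdet]; exact one_ne_zero
  have hJconj : J.map (starRingEnd ℂ) = J := by
    apply Matrix.ext
    simp only [Fin.forall_fin_two, Matrix.map_apply, eJ00, eJ01, eJ10, eJ11]
    refine ⟨⟨by simp, by simp⟩, by simp, by simp⟩
  obtain ⟨gc, hgcdef⟩ : ∃ gc : Matrix (Fin 2) (Fin 2) ℂ, g.map (starRingEnd ℂ) = gc := ⟨_, rfl⟩
  have hgce : ∀ i j, gc i j = starRingEnd ℂ (g i j) := by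
    intro i j; rw [← hgcdef]; rfl
  have hgcd : gc.det ≠ 0 := by
    have h1 : (starRingEnd ℂ) g.det = gc.det := by
      rw [RingHom.map_det, RingHom.mapMatrix_apply, hgcdef]
    rw [← h1]
    simpa using hgd
  obtain ⟨M, hMdef⟩ : ∃ M : Matrix (Fin 2) (Fin 2) ℂ, J * gc * J = M := ⟨_, rfl⟩
  have hMdet : M.det ≠ 0 := by
    rw [← hMdef, Matrix.det_mul, Matrix.det_mul, hJdet]
    simpa using hgcd
  have key : ∀ x, moeb M x = antip (moeb g (antip x)) := by
    intro x
    rw [antip_eq x, hJdef, ← moeb_mul g J hgd hJd, antip_eq, hJdef, conjP_moeb, conjP_conjP,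
      Matrix.map_mul, hJconj, hgcdef,
      ← moeb_mul J (gc * J) hJd (by rw [Matrix.det_mul, hJdet]; simpa using hgcd),
      ← Matrix.mul_assoc, hMdef]
  have hM : ∀ s, moeb M (z s) = w s := by
    intro s
    rw [key, hze s, hG (σ s), hwe (σ s), hσ s]
  have hginv_d : (g⁻¹).det ≠ 0 := by
    rw [Matrix.det_nonsing_inv, Ring.inverse_eq_inv]
    exact inv_ne_zero hgd
  have fixn : ∀ s, moeb (g⁻¹ * M) (z s) = z s := by
    intro s
    rw [moeb_mul g⁻¹ M hginv_d hMdet, hM s, ← hG s, ← moeb_mul g⁻¹ g hginv_d hgd,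
        Matrix.nonsing_inv_mul g hgu, moeb_one]
  -- three distinct labels
  obtain ⟨s0, s1, s2, h01, h02, h12⟩ : ∃ s0 s1 s2 : S, s0 ≠ s1 ∧ s0 ≠ s2 ∧ s1 ≠ s2 := by
    have hc : 3 ≤ Fintype.card S := by rwa [Nat.card_eq_fintype_card] at hS
    let e := Fintype.equivFin S
    refine ⟨e.symm ⟨0, by omega⟩, e.symm ⟨1, by omega⟩, e.symm ⟨2, by omega⟩,
      fun h => ?_, fun h => ?_, fun h => ?_⟩ <;>
    · have h2 := congrArg Fin.val (e.symm.injective h)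
      simp at h2
  obtain ⟨lam, hlam0, hlam⟩ :=
    moeb_fix3 (g⁻¹ * M)
      (by rw [Matrix.det_mul]; exact mul_ne_zero hginv_d hMdet)
      (z s0) (z s1) (z s2)
      (fun h => h01 (hz h)) (fun h => h02 (hz h)) (fun h => h12 (hz h))
      (fixn s0) (fixn s1) (fixn s2)
  have hMg : M = lam • g := by
    have h1 : g * (g⁻¹ * M) = M := by
      rw [← Matrix.mul_assoc, Matrix.mul_nonsing_inv g hgu, one_mul]
    rw [hlam, Matrix.mul_smul, mul_one] at h1
    exact h1.symm
  have hrel : ∀ i j, M i j = lam * g i j := by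
    intro i j; rw [hMg]; simp
  -- entries of M in terms of conjugates of g
  have hMent : ∀ i j, M i j = (J i 0 * gc 0 0 + J i 1 * gc 1 0) * J 0 j
      + (J i 0 * gc 0 1 + J i 1 * gc 1 1) * J 1 j := by
    intro i j
    rw [← hMdef, mul_entry, mul_entry, mul_entry]
  have hA : starRingEnd ℂ (g 0 0) = -(lam * g 1 1) := by
    have h1 := hrel 1 1
    rw [hMent 1 1] at h1
    simp only [eJ00, eJ01, eJ10, eJ11, hgce] at h1
    linear_combination -h1
  have hB : starRingEnd ℂ (g 0 1) = lam * g 1 0 := by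
    have h1 := hrel 1 0
    rw [hMent 1 0] at h1
    simp only [eJ00, eJ01, eJ10, eJ11, hgce] at h1
    linear_combination h1
  have hC : starRingEnd ℂ (g 1 0) = lam * g 0 1 := by
    have h1 := hrel 0 1
    rw [hMent 0 1] at h1
    simp only [eJ00, eJ01, eJ10, eJ11, hgce] at h1
    linear_combination h1
  have hD : starRingEnd ℂ (g 1 1) = -(lam * g 0 0) := by
    have h1 := hrel 0 0
    rw [hMent 0 0] at h1
    simp only [eJ00, eJ01, eJ10, eJ11, hgce] at h1
    linear_combination -h1
  -- star g * g is a positive real scalar matrix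
  obtain ⟨tr, htrdef⟩ : ∃ tr : ℝ, Complex.normSq (g 0 0) + Complex.normSq (g 1 0) = tr := ⟨_, rfl⟩
  have htr : 0 < tr := by
    rw [← htrdef]
    rcases eq_or_ne (g 0 0) 0 with h00 | h00
    · have h10 : g 1 0 ≠ 0 := by
        intro h10
        apply hgd
        rw [Matrix.det_fin_two, h00, h10]
        ring
      have := Complex.normSq_pos.mpr h10
      have := Complex.normSq_nonneg (g 0 0)
      linarith
    · have := Complex.normSq_pos.mpr h00
      have := Complex.normSq_nonneg (g 1 0)
      linarith
  have hsge : ∀ i j, (star g * g) i j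
      = starRingEnd ℂ (g 0 i) * g 0 j + starRingEnd ℂ (g 1 i) * g 1 j := by
    intro i j
    rw [mul_entry]
    simp [Matrix.star_apply, Complex.star_def]
  have hl : ∀ v : ℂ, starRingEnd ℂ v * v = (Complex.normSq v : ℂ) := by
    intro v
    rw [mul_comm, Complex.mul_conj]
  have hdiag : starRingEnd ℂ (g 0 0) * g 0 0 + starRingEnd ℂ (g 1 0) * g 1 0 = ((tr:ℝ):ℂ) := by
    rw [hl, hl, ← htrdef]
    push_cast
    ring
  have o01 : (1 : Matrix (Fin 2) (Fin 2) ℂ) 0 1 = 0 := Matrix.one_apply_ne (by decide)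
  have o10 : (1 : Matrix (Fin 2) (Fin 2) ℂ) 1 0 = 0 := Matrix.one_apply_ne (by decide)
  have hstar : star g * g = ((tr:ℝ):ℂ) • (1 : Matrix (Fin 2) (Fin 2) ℂ) := by
    apply Matrix.ext
    simp only [Fin.forall_fin_two, hsge, Matrix.smul_apply, smul_eq_mul,
      Matrix.one_apply_eq, o01, o10, mul_one, mul_zero]
    refine ⟨⟨hdiag, ?_⟩, ?_, ?_⟩
    · rw [hA, hC]; ring
    · rw [hB, hD]; ring
    · have same : starRingEnd ℂ (g 0 1) * g 0 1 + starRingEnd ℂ (g 1 1) * g 1 1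
          = starRingEnd ℂ (g 0 0) * g 0 0 + starRingEnd ℂ (g 1 0) * g 1 0 := by
        rw [hA, hB, hC, hD]; ring
      rw [same]; exact hdiag
  -- normalize
  obtain ⟨c1, hc1def⟩ : ∃ c1 : ℝ, (Real.sqrt tr)⁻¹ = c1 := ⟨_, rfl⟩
  have hc1 : c1 ≠ 0 := by
    rw [← hc1def]
    exact inv_ne_zero (Real.sqrt_pos.mpr htr).ne'
  have hscal : ((c1:ℂ)) * ((c1:ℂ)) * ((tr:ℝ):ℂ) = 1 := by
    have h1 : c1 * c1 * tr = 1 := by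
      rw [← hc1def]
      rw [← Real.mul_self_sqrt htr.le]
      field_simp
      rw [Real.sqrt_sq (Real.sqrt_nonneg _)]
    calc ((c1:ℂ)) * ((c1:ℂ)) * ((tr:ℝ):ℂ) = ((c1 * c1 * tr : ℝ) : ℂ) := by push_cast; ring
    _ = 1 := by rw [h1]; norm_num
  obtain ⟨h0, hh0def⟩ : ∃ h0 : Matrix (Fin 2) (Fin 2) ℂ, ((c1:ℂ)) • g = h0 := ⟨_, rfl⟩
  have hh0unit : star h0 * h0 = 1 := by
    rw [← hh0def, star_smul, smul_mul_assoc, mul_smul_comm, hstar, smul_smul, smul_smul]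
    have : star ((c1:ℂ)) = ((c1:ℂ)) := by
      rw [Complex.star_def, Complex.conj_ofReal]
    rw [this, hscal, one_smul]
  have hh0det : starRingEnd ℂ h0.det * h0.det = 1 := by
    have h1 := congrArg Matrix.det hh0unit
    rw [Matrix.det_mul, Matrix.det_one, Matrix.star_eq_conjTranspose,
      Matrix.det_conjTranspose, Complex.star_def] at h1
    exact h1
  have hh0dz : h0.det ≠ 0 := by
    intro h0z
    rw [h0z, mul_zero] at hh0det
    exact zero_ne_one hh0det
  obtain ⟨u, hu⟩ := IsAlgClosed.exists_pow_nat_eq (k := ℂ) (h0.det)⁻¹ (n := 2) (by norm_num)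
  have hns : (Complex.normSq u : ℂ) = starRingEnd ℂ u * u := by rw [← hl]
  have hnsq : Complex.normSq u ^ 2 = 1 := by
    have h1 : (Complex.normSq u : ℂ) ^ 2 = 1 := by
      rw [hns]
      have : (starRingEnd ℂ u * u) ^ 2 = starRingEnd ℂ (u ^ 2) * u ^ 2 := by
        rw [map_pow]; ring
      rw [this, hu, map_inv₀, ← mul_inv, hh0det, inv_one]
    exact_mod_cast h1
  have hnu : Complex.normSq u = 1 := by
    have hfac : (Complex.normSq u - 1) * (Complex.normSq u + 1) = 0 := by
      linear_combination hnsq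
    rcases mul_eq_zero.mp hfac with h | h
    · linarith [sub_eq_zero.mp h]
    · linarith [Complex.normSq_nonneg u]
  have huu : starRingEnd ℂ u * u = 1 := by
    rw [← hns, hnu]
    norm_num
  have hu0 : u ≠ 0 := by
    intro h0'
    rw [h0', mul_zero] at huu
    exact zero_ne_one huu
  -- the final matrix
  obtain ⟨A, hAdef⟩ : ∃ A : Matrix (Fin 2) (Fin 2) ℂ, u • h0 = A := ⟨_, rfl⟩
  have hAunit : star A * A = 1 := by
    rw [← hAdef, star_smul, smul_mul_assoc, mul_smul_comm, hh0unit, smul_smul]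
    rw [Complex.star_def, huu, one_smul]
  have hAdet : A.det = 1 := by
    rw [← hAdef, Matrix.det_smul]
    simp only [Fintype.card_fin]
    rw [hu]
    field_simp
  refine ⟨⟨A, (Matrix.mem_specialUnitaryGroup_iff).mpr
    ⟨(Matrix.mem_unitaryGroup_iff').mpr hAunit, hAdet⟩⟩, ?_⟩
  intro s
  have hAg : A = (u * (c1:ℂ)) • g := by
    rw [← hAdef, ← hh0def, smul_smul]
  show moeb A (z s) = w s
  rw [hAg, moeb_smul _ (mul_ne_zero hu0 (Complex.ofReal_ne_zero.mpr hc1)) g (z s)]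
  exact hG s
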